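/- arXiv:1610.01653 — 2 statements merged into one kernel-verified Lean document; each statement's English description precedes it below -/
import Mathlib

section
/- Let θ ∈ (0,1) and N ∈ ℕ. Define φ_N : ℝ → ℝ by φ_N(x) = e^{θ|x|} if |x| < N and φ_N(x) = e^{θN} if |x| ≥ N. Then for every x ∈ ℝ, φ_N(x) · ∫_ℝ e^{-|x-y|} / φ_N(y) dy ≤ 4/(1-θ). -/
open MeasureTheory Real

lemma aux_integrable_exp_abs {a : ℝ} (ha : 0 < a) :
    Integrable (fun y : ℝ => Real.exp (-(a * |y|))) := by
  have h1 : IntegrableOn (fun y : ℝ => Real.exp (-(a * |y|))) (Set.Ioi 0) := by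
    refine (exp_neg_integrableOn_Ioi 0 ha).congr_fun (fun y hy => ?_) measurableSet_Ioi
    simp only [abs_of_pos (show (0:ℝ) < y from hy), neg_mul]
  have h2 : IntegrableOn (fun y : ℝ => Real.exp (-(a * |y|))) (Set.Iic 0) := by
    rw [← Measure.map_neg_eq_self (volume : Measure ℝ)]
    have m : MeasurableEmbedding fun x : ℝ => -x := (Homeomorph.neg ℝ).measurableEmbedding
    rw [m.integrableOn_map_iff]
    simp_rw [Function.comp_def, abs_neg, Set.neg_preimage, Set.neg_Iic, neg_zero]
    exact Iff.mpr integrableOn_Ici_iff_integrableOn_Ioi h1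
  have := h2.union h1
  rwa [Set.Iic_union_Ioi, integrableOn_univ] at this

lemma aux_integral_exp_abs {a : ℝ} (ha : 0 < a) :
    ∫ y : ℝ, Real.exp (-(a * |y|)) = 2 / a := by
  have h : ∫ y : ℝ, Real.exp (-(a * |y|))
      = 2 * ∫ y in Set.Ioi (0:ℝ), Real.exp (-(a * y)) :=
    integral_comp_abs (f := fun t => Real.exp (-(a * t)))
  have h2 := integral_comp_mul_left_Ioi (fun t => Real.exp (-t)) 0 ha
  simp only [mul_zero, integral_exp_neg_Ioi, neg_zero, Real.exp_zero, smul_eq_mul,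
    mul_one] at h2
  rw [h, h2]
  field_simp

theorem phiN_convolution_bound (θ : ℝ) (hθ : θ ∈ Set.Ioo (0:ℝ) 1) (N : ℕ)
    (φ : ℝ → ℝ)
    (hφ : ∀ x, φ x = if |x| < (N:ℝ) then Real.exp (θ * |x|) else Real.exp (θ * N)) :
    ∀ x : ℝ, φ x * ∫ y : ℝ, Real.exp (-|x - y|) / φ y ≤ 4 / (1 - θ) := by
  obtain ⟨hθ0, hθ1⟩ := hθ
  have ha : (0:ℝ) < 1 - θ := by linarith
  -- φ expressed with min
  have hφ' : ∀ t : ℝ, φ t = Real.exp (θ * min |t| (N:ℝ)) := by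
    intro t
    rw [hφ t]
    split_ifs with h
    · rw [min_eq_left h.le]
    · rw [min_eq_right (le_of_not_gt h)]
  have hφpos : ∀ t : ℝ, 0 < φ t := fun t => by rw [hφ' t]; exact Real.exp_pos _
  intro x
  -- pointwise bound
  have key : ∀ y : ℝ, φ x * (Real.exp (-|x - y|) / φ y)
      ≤ Real.exp (-((1 - θ) * |x - y|)) := by
    intro y
    rw [hφ' x, hφ' y, div_eq_mul_inv, ← Real.exp_neg, ← Real.exp_add, ← Real.exp_add]
    apply Real.exp_le_exp.mpr
    have hmin : min |x| (N:ℝ) - min |y| (N:ℝ) ≤ |x - y| := by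
      rcases le_total |y| (N:ℝ) with h | h
      · have h1 : min |x| (N:ℝ) ≤ |x| := min_le_left _ _
        have h2 := abs_sub_abs_le_abs_sub x y
        rw [min_eq_left h]
        linarith
      · have h1 : min |x| (N:ℝ) ≤ (N:ℝ) := min_le_right _ _
        have h2 : (0:ℝ) ≤ |x - y| := abs_nonneg _
        rw [min_eq_right h]
        linarith
    nlinarith [abs_nonneg (x - y)]
  -- integrability of the majorant
  have hint : Integrable (fun y : ℝ => Real.exp (-((1 - θ) * |x - y|))) :=
    (aux_integrable_exp_abs ha).comp_sub_left x
  calc φ x * ∫ y : ℝ, Real.exp (-|x - y|) / φ y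
      = ∫ y : ℝ, φ x * (Real.exp (-|x - y|) / φ y) := (integral_const_mul _ _).symm
    _ ≤ ∫ y : ℝ, Real.exp (-((1 - θ) * |x - y|)) := by
        apply integral_mono_of_nonneg
        · filter_upwards with y
          exact mul_nonneg (hφpos x).le (div_nonneg (Real.exp_nonneg _) (hφpos y).le)
        · exact hint
        · filter_upwards with y using key y
    _ = ∫ y : ℝ, Real.exp (-((1 - θ) * |y|)) :=
        integral_sub_left_eq_self (fun t => Real.exp (-((1 - θ) * |t|))) volume x
    _ = 2 / (1 - θ) := aux_integral_exp_abs ha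
    _ ≤ 4 / (1 - θ) := by gcongr; norm_num
end

section
/- Let G(x) = (1/2) e^{-|x|} and let f : ℝ → ℝ be continuous, nonnegative, not identically zero, with f(x) = o(e^{-x}) as x → ∞ and f(y) e^y integrable on (-∞, a] for every a. Then there exist c₀ > 0 and x₀ such that for all x ≥ x₀, (d/dx)(G * f)(x) ≤ -(c₀/2) e^{-x} + o(e^{-x}); in particular (G*f)'(x) is not o(e^{-x}) as x → ∞. -/
open MeasureTheory Real Filter
open Set

-- exp(-2y) integral value
lemma val_exp2 (x : ℝ) : (∫ y in Ioi x, Real.exp (-2 * y)) = Real.exp (-2 * x) / 2 := by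
  have hd : ∀ y ∈ Ici x, HasDerivAt (fun y : ℝ => -Real.exp (-2 * y) / 2) (Real.exp (-2 * y)) y := by
    intro y _
    have h1 : HasDerivAt (fun y : ℝ => -2 * y) (-2) y := by
      simpa using (hasDerivAt_id y).const_mul (-2 : ℝ)
    have h2 := (Real.hasDerivAt_exp (-2 * y)).comp y h1
    have h3 := (h2.const_mul (-(1/2) : ℝ))
    have h4 : (fun y : ℝ => -Real.exp (-2 * y) / 2) = fun y => -(1/2) * (Real.exp ∘ HMul.hMul (-2)) y := by
      funext z; simp only [Function.comp]; ring
    rw [h4]; exact h3.congr_deriv (by ring)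
  have hint : IntegrableOn (fun y : ℝ => Real.exp (-2 * y)) (Ioi x) := by
    exact exp_neg_integrableOn_Ioi x (by norm_num)
  have hten : Tendsto (fun y : ℝ => -Real.exp (-2 * y) / 2) atTop (nhds 0) := by
    have : Tendsto (fun y : ℝ => -2 * y) atTop atBot := by
      apply Tendsto.const_mul_atTop_of_neg (by norm_num) tendsto_id
    have := (Real.tendsto_exp_atBot).comp this
    have h := this.neg.div_const 2
    simpa using h
  have := MeasureTheory.integral_Ioi_of_hasDerivAt_of_tendsto' hd hint hten
  rw [this]; ring

lemma hintIoi (f : ℝ → ℝ) (hc : Continuous f) (hnn : ∀ x, 0 ≤ f x)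
    (hdecay : Tendsto (fun x => Real.exp x * f x) atTop (nhds 0)) (a : ℝ) :
    IntegrableOn (fun y => Real.exp (-y) * f y) (Ioi a) := by
  obtain ⟨M, hM⟩ := (eventually_atTop.1 (hdecay.eventually (gt_mem_nhds one_pos)))
  set M' := max a M with hM'
  have h1 : IntegrableOn (fun y => Real.exp (-y) * f y) (Ioc a M') :=
    (Continuous.mul (by continuity) hc).integrableOn_Ioc
  have h2 : IntegrableOn (fun y => Real.exp (-y) * f y) (Ioi M') := by
    have hb : IntegrableOn (fun y : ℝ => Real.exp (-2 * y)) (Ioi M') :=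
      exp_neg_integrableOn_Ioi M' (by norm_num)
    apply hb.mono' ((Continuous.mul (by continuity) hc).aestronglyMeasurable)
    filter_upwards [ae_restrict_mem measurableSet_Ioi] with y hy
    have hyM : M ≤ y := le_trans (le_max_right a M) (le_of_lt hy)
    have hle : Real.exp y * f y ≤ 1 := (hM y hyM).le
    have : Real.exp (-y) * f y = Real.exp (-2 * y) * (Real.exp y * f y) := by
      rw [← mul_assoc, ← Real.exp_add]; ring_nf
    rw [Real.norm_eq_abs]
    show |Real.exp (-y) * f y| ≤ Real.exp (-2 * y)
    rw [abs_of_nonneg (mul_nonneg (Real.exp_pos _).le (hnn y)), this]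
    calc Real.exp (-2 * y) * (Real.exp y * f y) ≤ Real.exp (-2 * y) * 1 :=
          mul_le_mul_of_nonneg_left hle (Real.exp_pos _).le
      _ = Real.exp (-2 * y) := mul_one _
  have := h1.union h2
  rwa [Ioc_union_Ioi_eq_Ioi (le_max_left a M)] at this

section
variable (f : ℝ → ℝ)

lemma split_eq (hc : Continuous f)
    (hint : ∀ a : ℝ, IntegrableOn (fun y => Real.exp y * f y) (Set.Iic a))
    (hintI : ∀ a : ℝ, IntegrableOn (fun y => Real.exp (-y) * f y) (Set.Ioi a)) (z : ℝ) :
    (∫ y : ℝ, (1/2) * Real.exp (-|z - y|) * f y) =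
      (1/2) * Real.exp (-z) * (∫ y in Iic z, Real.exp y * f y) +
      (1/2) * Real.exp z * (∫ y in Ioi z, Real.exp (-y) * f y) := by
  have e1 : EqOn (fun y => (1/2) * Real.exp (-|z - y|) * f y)
      (fun y => ((1/2) * Real.exp (-z)) * (Real.exp y * f y)) (Iic z) := by
    intro y hy
    simp only []
    rw [abs_of_nonneg (by simp at hy; linarith), show -(z - y) = -z + y by ring,
      Real.exp_add]
    ring
  have e2 : EqOn (fun y => (1/2) * Real.exp (-|z - y|) * f y)
      (fun y => ((1/2) * Real.exp z) * (Real.exp (-y) * f y)) (Ioi z) := by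
    intro y hy
    simp only []
    rw [abs_of_nonpos (by simp at hy; linarith), show -(-(z - y)) = z + -y by ring,
      Real.exp_add]
    ring
  have i1 : IntegrableOn (fun y => (1/2) * Real.exp (-|z - y|) * f y) (Iic z) :=
    IntegrableOn.congr_fun (by exact (hint z).const_mul ((1/2) * Real.exp (-z)))
      e1.symm measurableSet_Iic
  have i2 : IntegrableOn (fun y => (1/2) * Real.exp (-|z - y|) * f y) (Ioi z) :=
    IntegrableOn.congr_fun (by exact (hintI z).const_mul ((1/2) * Real.exp z))
      e2.symm measurableSet_Ioi
  rw [← intervalIntegral.integral_Iic_add_Ioi i1 i2,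
    setIntegral_congr_fun measurableSet_Iic e1, setIntegral_congr_fun measurableSet_Ioi e2,
    MeasureTheory.integral_const_mul, MeasureTheory.integral_const_mul, mul_assoc, mul_assoc]

lemma hasDerivA (hc : Continuous f)
    (hint : ∀ a : ℝ, IntegrableOn (fun y => Real.exp y * f y) (Set.Iic a)) (x : ℝ) :
    HasDerivAt (fun z => ∫ y in Iic z, Real.exp y * f y) (Real.exp x * f x) x := by
  have hg : Continuous (fun y => Real.exp y * f y) := Real.continuous_exp.mul hc
  have key : ∀ z : ℝ, (∫ y in Iic z, Real.exp y * f y)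
      = (∫ y in Iic (0:ℝ), Real.exp y * f y) + ∫ y in (0:ℝ)..z, Real.exp y * f y := by
    intro z
    have := intervalIntegral.integral_Iic_sub_Iic (hint 0) (hint z)
    linarith
  have hD : HasDerivAt (fun z => (∫ y in Iic (0:ℝ), Real.exp y * f y)
      + ∫ y in (0:ℝ)..z, Real.exp y * f y) (Real.exp x * f x) x := by
    apply HasDerivAt.const_add
    exact intervalIntegral.integral_hasDerivAt_right (hg.intervalIntegrable _ _)
      (hg.stronglyMeasurableAtFilter _ _) hg.continuousAt
  exact hD.congr_of_eventuallyEq (Filter.Eventually.of_forall key)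

lemma hasDerivB (hc : Continuous f)
    (hintI : ∀ a : ℝ, IntegrableOn (fun y => Real.exp (-y) * f y) (Set.Ioi a)) (x : ℝ) :
    HasDerivAt (fun z => ∫ y in Ioi z, Real.exp (-y) * f y) (-(Real.exp (-x) * f x)) x := by
  have hh : Continuous (fun y => Real.exp (-y) * f y) := by continuity
  set a₁ := x - 1 with ha₁
  have key : ∀ z ∈ Ioi a₁, (∫ y in Ioi z, Real.exp (-y) * f y)
      = (∫ y in Ioi a₁, Real.exp (-y) * f y) - ∫ y in a₁..z, Real.exp (-y) * f y := by
    intro z hz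
    have hdisj : Disjoint (Ioc a₁ z) (Ioi z) := Ioc_disjoint_Ioi le_rfl
    have hun : Ioc a₁ z ∪ Ioi z = Ioi a₁ := Ioc_union_Ioi_eq_Ioi (le_of_lt hz)
    have h2 : IntegrableOn (fun y => Real.exp (-y) * f y) (Ioc a₁ z) :=
      hh.integrableOn_Ioc
    have hu := setIntegral_union hdisj measurableSet_Ioi h2 (hintI z)
    rw [hun] at hu
    rw [intervalIntegral.integral_of_le (le_of_lt hz)]
    linarith
  have hD : HasDerivAt (fun z => (∫ y in Ioi a₁, Real.exp (-y) * f y)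
      - ∫ y in a₁..z, Real.exp (-y) * f y) (-(Real.exp (-x) * f x)) x := by
    apply HasDerivAt.const_sub
    exact intervalIntegral.integral_hasDerivAt_right (hh.intervalIntegrable _ _)
      (hh.stronglyMeasurableAtFilter _ _) hh.continuousAt
  apply hD.congr_of_eventuallyEq
  filter_upwards [Ioi_mem_nhds (show a₁ < x by simp [ha₁])] with z hz
  exact key z hz

end

theorem deriv_green_convolution_not_little_o (f : ℝ → ℝ) (hc : Continuous f)
    (hnn : ∀ x, 0 ≤ f x) (hne : f ≠ 0)
    (hdecay : Tendsto (fun x => Real.exp x * f x) atTop (nhds 0))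
    (hint : ∀ a : ℝ, IntegrableOn (fun y => Real.exp y * f y) (Set.Iic a)) :
    (∃ c₀ > 0, ∃ x₀ : ℝ, ∃ r : ℝ → ℝ,
      Tendsto (fun x => Real.exp x * r x) atTop (nhds 0) ∧
      ∀ x ≥ x₀,
        deriv (fun z : ℝ => ∫ y : ℝ, (1/2) * Real.exp (-|z - y|) * f y) x ≤
          -(c₀ / 2) * Real.exp (-x) + r x) ∧
    ¬ Tendsto
        (fun x => Real.exp x *
          deriv (fun z : ℝ => ∫ y : ℝ, (1/2) * Real.exp (-|z - y|) * f y) x)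
        atTop (nhds 0) := by
  have hintI : ∀ a : ℝ, IntegrableOn (fun y => Real.exp (-y) * f y) (Set.Ioi a) :=
    hintIoi f hc hnn hdecay
  set A : ℝ → ℝ := fun z => ∫ y in Iic z, Real.exp y * f y with hA
  set B : ℝ → ℝ := fun z => ∫ y in Ioi z, Real.exp (-y) * f y with hB
  -- derivative formula
  have hderiv : ∀ x : ℝ, deriv (fun z : ℝ => ∫ y : ℝ, (1/2) * Real.exp (-|z - y|) * f y) x
      = -(1/2) * Real.exp (-x) * A x + (1/2) * Real.exp x * B x := by
    intro x
    have hE1 : HasDerivAt (fun z : ℝ => Real.exp (-z)) (-Real.exp (-x)) x := by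
      have := (Real.hasDerivAt_exp (-x)).comp x ((hasDerivAt_id x).neg)
      exact this.congr_deriv (by simp)
    have t1 : HasDerivAt (fun z : ℝ => 1/2 * Real.exp (-z) * A z)
        ((1/2 * -Real.exp (-x)) * A x + (1/2 * Real.exp (-x)) * (Real.exp x * f x)) x := by
      exact (hE1.const_mul (1/2)).mul (hasDerivA f hc hint x)
    have t2 : HasDerivAt (fun z : ℝ => 1/2 * Real.exp z * B z)
        ((1/2 * Real.exp x) * B x + (1/2 * Real.exp x) * (-(Real.exp (-x) * f x))) x := by
      exact ((Real.hasDerivAt_exp x).const_mul (1/2)).mul (hasDerivB f hc hintI x)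
    have hsum := t1.add t2
    have hfun : (fun z : ℝ => ∫ y : ℝ, (1/2) * Real.exp (-|z - y|) * f y)
        = fun z : ℝ => 1/2 * Real.exp (-z) * A z + 1/2 * Real.exp z * B z := by
      funext z; exact split_eq f hc hint hintI z
    rw [hfun]
    exact hsum.deriv.trans (by ring)
  -- choose p, δ, c₀
  obtain ⟨p, hp⟩ : ∃ p, f p ≠ 0 := Function.ne_iff.1 hne
  have hfp : 0 < f p := lt_of_le_of_ne (hnn p) (Ne.symm hp)
  have hmem : f ⁻¹' (Ioi 0) ∈ nhds p := hc.continuousAt (Ioi_mem_nhds hfp)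
  obtain ⟨δ, hδpos, hball⟩ := Metric.mem_nhds_iff.1 hmem
  rw [Real.ball_eq_Ioo] at hball
  have hg : Continuous (fun y => Real.exp y * f y) := Real.continuous_exp.mul hc
  set c₀ : ℝ := ∫ y in (p - δ)..(p + δ), Real.exp y * f y with hc₀
  have hc₀pos : 0 < c₀ := by
    refine intervalIntegral.intervalIntegral_pos_of_pos_on (hg.intervalIntegrable _ _) ?_ (by linarith)
    intro y hy
    exact mul_pos (Real.exp_pos y) (hball hy)
  set x₀ : ℝ := p + δ with hx₀
  -- A x ≥ c₀ for x ≥ x₀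
  have hAge : ∀ x ≥ x₀, c₀ ≤ A x := by
    intro x hx
    have h1 : c₀ = ∫ y in Ioc (p - δ) (p + δ), Real.exp y * f y := by
      rw [hc₀, intervalIntegral.integral_of_le (by linarith)]
    rw [h1, hA]
    apply setIntegral_mono_set (hint x)
      (Filter.Eventually.of_forall fun y => mul_nonneg (Real.exp_pos y).le (hnn y))
    exact (HasSubset.Subset.eventuallyLE fun y hy => le_trans hy.2 hx)
  set r : ℝ → ℝ := fun x => 1/2 * Real.exp x * B x with hr
  have hBnn : ∀ x, 0 ≤ B x := fun x =>
    setIntegral_nonneg measurableSet_Ioi fun y _ => mul_nonneg (Real.exp_pos _).le (hnn y)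
  -- tendsto of exp x * r x
  have hrt : Tendsto (fun x => Real.exp x * r x) atTop (nhds 0) := by
    rw [Metric.tendsto_atTop]
    intro ε hε
    obtain ⟨M, hM⟩ := eventually_atTop.1 (hdecay.eventually (gt_mem_nhds hε))
    refine ⟨M, fun x hx => ?_⟩
    have hBle : B x ≤ ε * (Real.exp (-2 * x) / 2) := by
      have hle : ∀ y ∈ Ioi x, Real.exp (-y) * f y ≤ ε * Real.exp (-2 * y) := by
        intro y hy
        have h1 : Real.exp y * f y ≤ ε := (hM y (by simp at hy; linarith)).le
        have h2 : Real.exp (-y) * f y = Real.exp (-2 * y) * (Real.exp y * f y) := by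
          rw [← mul_assoc, ← Real.exp_add]; ring_nf
        rw [h2, mul_comm (ε) _]
        exact mul_le_mul_of_nonneg_left h1 (Real.exp_pos _).le
      have : B x ≤ ∫ y in Ioi x, ε * Real.exp (-2 * y) := by
        apply setIntegral_mono_on (hintI x)
          ((exp_neg_integrableOn_Ioi x (by norm_num)).const_mul ε) measurableSet_Ioi hle
      rwa [MeasureTheory.integral_const_mul, val_exp2] at this
    have e1 : Real.exp x * Real.exp x * Real.exp (-2 * x) = 1 := by
      rw [← Real.exp_add, ← Real.exp_add, show x + x + -2 * x = 0 by ring, Real.exp_zero]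
    have hv : Real.exp x * r x ≤ ε / 4 := by
      calc Real.exp x * r x = 1/2 * (Real.exp x * Real.exp x) * B x := by rw [hr]; ring
        _ ≤ 1/2 * (Real.exp x * Real.exp x) * (ε * (Real.exp (-2 * x) / 2)) :=
            mul_le_mul_of_nonneg_left hBle (by positivity)
        _ = ε / 4 * (Real.exp x * Real.exp x * Real.exp (-2 * x)) := by ring
        _ = ε / 4 := by rw [e1, mul_one]
    have hvnn : 0 ≤ Real.exp x * r x := by
      have := hBnn x
      rw [hr]
      positivity
    rw [Real.dist_eq, sub_zero, abs_of_nonneg hvnn]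
    linarith
  have hbound : ∀ x ≥ x₀,
      deriv (fun z : ℝ => ∫ y : ℝ, (1/2) * Real.exp (-|z - y|) * f y) x ≤
        -(c₀ / 2) * Real.exp (-x) + r x := by
    intro x hx
    rw [hderiv x]
    simp only [hr]
    have h1 := hAge x hx
    have h2 := (Real.exp_pos (-x)).le
    nlinarith [mul_le_mul_of_nonneg_left h1 h2]
  refine ⟨⟨c₀, hc₀pos, x₀, r, hrt, hbound⟩, ?_⟩
  intro hcon
  have hev : ∀ᶠ x in atTop, Real.exp x *
      deriv (fun z : ℝ => ∫ y : ℝ, (1/2) * Real.exp (-|z - y|) * f y) x ≤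
      -(c₀ / 2) + Real.exp x * r x := by
    filter_upwards [eventually_ge_atTop x₀] with x hx
    have := hbound x hx
    have h2 := (Real.exp_pos x).le
    have h3 : Real.exp x * Real.exp (-x) = 1 := by rw [← Real.exp_add]; norm_num
    nlinarith [mul_le_mul_of_nonneg_left this h2]
  have hlim : Tendsto (fun x => -(c₀ / 2) + Real.exp x * r x) atTop (nhds (-(c₀ / 2) + 0)) :=
    (tendsto_const_nhds).add hrt
  have := le_of_tendsto_of_tendsto hcon hlim hev
  simp at this
  linarith
end
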